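/- With the same setup as before (γ a reduced closed path with v_γ ≥ 2, s a labeling, N ≥ 2 the number of connected components of the agreement graph G, and C the number of indices i with s(γ(i)) ≠ s(γ(i+1))): if h denotes the number of connected components of G consisting of a single vertex, then C ≥ N + h. -/

import Mathlib

/-- The agreement graph on the vertex set of the closed path `γ` (its image on `{0,…,ℓ}`):
`z` and `z'` are adjacent iff they carry the same label under `s` and form a consecutive
pair of the path. -/
def agreementGraph (p ℓ : ℕ) (γ : ℕ → Fin p) {X : Type*} (s : Fin p → X) :
    SimpleGraph ↥(γ '' Set.Iic ℓ) where
  Adj z z' := z ≠ z' ∧ s z.1 = s z'.1 ∧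
    ∃ i < ℓ, ({γ i, γ (i + 1)} : Set (Fin p)) = {z.1, z'.1}
  symm := by
    constructor
    rintro z z' ⟨h1, h2, i, hi, h3⟩
    exact ⟨h1.symm, h2.symm, ⟨i, hi, by rw [h3]; exact Set.pair_comm _ _⟩⟩
  loopless := ⟨fun z h => h.1 rfl⟩

/-!
Follow the path and record the component of the agreement graph containing `γ i`. This
component can only change at a step where the label changes, so `C` is at least the number of
steps at which the component changes. Since the path is closed, visits every component and
there are at least two of them, it leaves every component at least once. A component `{z}`
consisting of a single vertex is left at every visit of `z`, because consecutive vertices of the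
path differ, and `z` is visited at least twice.
-/

open SimpleGraph

lemma exists_exit_of_closed {α : Type*} {f : ℕ → α} {ℓ i j : ℕ} {c : α} (hf : f ℓ = f 0)
    (hi : i ≤ ℓ) (hfi : f i = c) (hj : j ≤ ℓ) (hfj : f j ≠ c) :
    ∃ k < ℓ, f k = c ∧ f (k + 1) ≠ c := by
  by_contra! hstay
  have hup : ∀ m, i ≤ m → m ≤ ℓ → f m = c := by
    refine Nat.le_induction (fun _ => hfi) fun m _ ih hm => ?_
    exact hstay m hm (ih (by omega))
  have hall : ∀ m, m ≤ ℓ → f m = c := by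
    intro m
    induction m with
    | zero => exact fun _ => hf ▸ hup ℓ hi le_rfl
    | succ m ih => exact fun hm => hstay m hm (ih (by omega))
  exact hfj (hall j hj)

lemma card_add_card_le_card_of_fibers {ι β : Type*} [Finite β] [DecidableEq β] (P : β → Prop)
    (D : Finset ι) (F : ι → β) (hpos : ∀ c, (D.filter (F · = c)).Nonempty)
    (htwo : ∀ c, P c → 1 < (D.filter (F · = c)).card) :
    Nat.card β + Nat.card {c // P c} ≤ D.card := by
  classical
  have := Fintype.ofFinite β
  rw [Finset.card_eq_sum_card_fiberwise (t := Finset.univ) fun i _ => Finset.mem_univ (F i),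
    Nat.card_eq_fintype_card, Nat.card_eq_fintype_card, Fintype.card_subtype, Finset.card_filter,
    ← Finset.card_univ, Finset.card_eq_sum_ones, ← Finset.sum_add_distrib]
  refine Finset.sum_le_sum fun c _ => ?_
  split_ifs with hc
  · exact htwo c hc
  · exact (hpos c).card_pos

namespace agreementGraph

open scoped Classical

variable {p ℓ : ℕ} {γ : ℕ → Fin p} {X : Type*} {s : Fin p → X}

-- Indices beyond `ℓ` are clamped to `ℓ`.
def componentAt (p ℓ : ℕ) (γ : ℕ → Fin p) {X : Type*} (s : Fin p → X) (i : ℕ) :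
    (agreementGraph p ℓ γ s).ConnectedComponent :=
  connectedComponentMk _ ⟨γ (min i ℓ), Set.mem_image_of_mem γ (Set.mem_Iic.2 (min_le_right i ℓ))⟩

noncomputable def exits (p ℓ : ℕ) (γ : ℕ → Fin p) {X : Type*} (s : Fin p → X) : Finset ℕ :=
  (Finset.range ℓ).filter fun i => componentAt p ℓ γ s i ≠ componentAt p ℓ γ s (i + 1)

lemma componentAt_of_le {i : ℕ} (hi : i ≤ ℓ) (z : ↥(γ '' Set.Iic ℓ)) (hz : z.1 = γ i) :
    componentAt p ℓ γ s i = connectedComponentMk _ z := by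
  have hmin : min i ℓ = i := min_eq_left hi
  simp only [componentAt, hmin, ← hz]

lemma componentAt_ell_eq_zero (hclosed : γ ℓ = γ 0) :
    componentAt p ℓ γ s ℓ = componentAt p ℓ γ s 0 := by
  have h0 : γ 0 ∈ γ '' Set.Iic ℓ := Set.mem_image_of_mem γ (Set.mem_Iic.2 (Nat.zero_le ℓ))
  rw [componentAt_of_le le_rfl ⟨γ 0, h0⟩ hclosed.symm,
    componentAt_of_le (Nat.zero_le ℓ) ⟨γ 0, h0⟩ rfl]

lemma componentAt_succ (hnoconsec : ∀ i < ℓ, γ i ≠ γ (i + 1)) {i : ℕ} (hi : i < ℓ)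
    (hs : s (γ i) = s (γ (i + 1))) : componentAt p ℓ γ s i = componentAt p ℓ γ s (i + 1) := by
  rw [componentAt_of_le hi.le ⟨γ i, Set.mem_image_of_mem γ (Set.mem_Iic.2 hi.le)⟩ rfl,
    componentAt_of_le hi ⟨γ (i + 1), Set.mem_image_of_mem γ (Set.mem_Iic.2 hi)⟩ rfl]
  refine ConnectedComponent.sound (Adj.reachable ⟨?_, hs, i, hi, rfl⟩)
  exact fun he => hnoconsec i hi (congrArg Subtype.val he)

lemma exists_componentAt_eq (hvisit : ∀ z ∈ γ '' Set.Iic ℓ, ∃ i < ℓ, γ i = z)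
    (c : (agreementGraph p ℓ γ s).ConnectedComponent) :
    ∃ i < ℓ, componentAt p ℓ γ s i = c := by
  obtain ⟨z, rfl⟩ := c.exists_rep
  obtain ⟨i, hi, hγi⟩ := hvisit z.1 z.2
  exact ⟨i, hi, componentAt_of_le hi.le z hγi.symm⟩

lemma exits_subset (hnoconsec : ∀ i < ℓ, γ i ≠ γ (i + 1)) :
    (exits p ℓ γ s : Set ℕ) ⊆ {i | i < ℓ ∧ s (γ i) ≠ s (γ (i + 1))} := by
  intro i hi
  simp only [exits, Finset.coe_filter, Finset.mem_range, Set.mem_ofPred_eq] at hi ⊢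
  exact ⟨hi.1, fun hs => hi.2 (componentAt_succ hnoconsec hi.1 hs)⟩

lemma exits_filter_nonempty (hclosed : γ ℓ = γ 0)
    (hvisit : ∀ z ∈ γ '' Set.Iic ℓ, ∃ i < ℓ, γ i = z)
    (hN2 : 2 ≤ Nat.card (agreementGraph p ℓ γ s).ConnectedComponent)
    (c : (agreementGraph p ℓ γ s).ConnectedComponent) :
    ((exits p ℓ γ s).filter (componentAt p ℓ γ s · = c)).Nonempty := by
  have : Nontrivial (agreementGraph p ℓ γ s).ConnectedComponent :=
    Finite.one_lt_card_iff_nontrivial.1 hN2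
  obtain ⟨c', hc'⟩ := exists_ne c
  obtain ⟨i, hi, hci⟩ := exists_componentAt_eq hvisit c
  obtain ⟨j, hj, hcj⟩ := exists_componentAt_eq hvisit c'
  obtain ⟨k, hk, hck, hck'⟩ :=
    exists_exit_of_closed (componentAt_ell_eq_zero hclosed) hi.le hci hj.le (hcj ▸ hc')
  exact ⟨k, by simp [exits, hk, hck, Ne.symm hck']⟩

lemma one_lt_card_exits_filter_of_supp_eq (hnoconsec : ∀ i < ℓ, γ i ≠ γ (i + 1))
    (hfib : ∀ z ∈ γ '' Set.Iic ℓ, 2 ≤ {i | i < ℓ ∧ γ i = z}.ncard)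
    {c : (agreementGraph p ℓ γ s).ConnectedComponent} {z : ↥(γ '' Set.Iic ℓ)}
    (hc : c.supp = {z}) :
    1 < ((exits p ℓ γ s).filter (componentAt p ℓ γ s · = c)).card := by
  have hvisits :
      {i | i < ℓ ∧ γ i = z.1} ⊆ ↑((exits p ℓ γ s).filter (componentAt p ℓ γ s · = c)) := by
    rintro i ⟨hi, hγi⟩
    have hci : componentAt p ℓ γ s i = c := by
      rw [componentAt_of_le hi.le z hγi.symm]
      exact (hc.symm ▸ rfl : z ∈ c.supp)
    -- `γ (i + 1) ≠ z`, and `z` is the only vertex of `c`.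
    have hci' : componentAt p ℓ γ s (i + 1) ≠ c := by
      rw [componentAt_of_le hi ⟨γ (i + 1), Set.mem_image_of_mem γ (Set.mem_Iic.2 hi)⟩ rfl]
      intro he
      have hmem : _ ∈ c.supp := he
      rw [hc, Set.mem_singleton_iff] at hmem
      exact hnoconsec i hi (hγi.trans (congrArg Subtype.val hmem).symm)
    simp [exits, hi, hci, Ne.symm hci']
  have := Set.ncard_le_ncard hvisits (Finset.finite_toSet _)
  rw [Set.ncard_coe_finset] at this
  have := hfib z.1 z.2
  omega

end agreementGraph

open agreementGraph in
theorem stmt_7_general (p ℓ : ℕ) (γ : ℕ → Fin p) (hclosed : γ ℓ = γ 0)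
    (hfib : ∀ z ∈ γ '' Set.Iic ℓ, 2 ≤ {i | i < ℓ ∧ γ i = z}.ncard)
    (hnoconsec : ∀ i < ℓ, γ i ≠ γ (i + 1))
    {X : Type*} (s : Fin p → X)
    (N : ℕ) (hN : N = Nat.card (agreementGraph p ℓ γ s).ConnectedComponent)
    (h : ℕ)
    (hh : h = Nat.card {c : (agreementGraph p ℓ γ s).ConnectedComponent // c.supp.ncard = 1})
    (C : ℕ) (hC : C = {i | i < ℓ ∧ s (γ i) ≠ s (γ (i + 1))}.ncard)
    (hN2 : 2 ≤ N) :
    N + h ≤ C := by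
  classical
  subst hN hh hC
  have hvisit : ∀ z ∈ γ '' Set.Iic ℓ, ∃ i < ℓ, γ i = z := fun z hz =>
    Set.nonempty_of_ncard_ne_zero (s := {i | i < ℓ ∧ γ i = z}) (by have := hfib z hz; omega)
  calc _ ≤ (exits p ℓ γ s).card :=
        card_add_card_le_card_of_fibers _ _ _ (exits_filter_nonempty hclosed hvisit hN2)
          fun c hc => by
            obtain ⟨z, hz⟩ := Set.ncard_eq_one.1 hc
            exact one_lt_card_exits_filter_of_supp_eq hnoconsec hfib hz
    _ = (exits p ℓ γ s : Set ℕ).ncard := (Set.ncard_coe_finset _).symm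
    _ ≤ _ :=
      Set.ncard_le_ncard (exits_subset hnoconsec) ((Set.finite_Iio ℓ).subset fun _ hi => hi.1)

theorem stmt_7 (p ℓ : ℕ) (γ : ℕ → Fin p) (hclosed : γ ℓ = γ 0)
    (hcard : 2 ≤ (γ '' Set.Iic ℓ).ncard)
    (hfib : ∀ z ∈ γ '' Set.Iic ℓ, 2 ≤ {i | i < ℓ ∧ γ i = z}.ncard)
    (hnoconsec : ∀ i < ℓ, γ i ≠ γ (i + 1))
    {X : Type*} (s : Fin p → X)
    (N : ℕ) (hN : N = Nat.card (agreementGraph p ℓ γ s).ConnectedComponent)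
    (h : ℕ)
    (hh : h = Nat.card {c : (agreementGraph p ℓ γ s).ConnectedComponent // c.supp.ncard = 1})
    (C : ℕ) (hC : C = {i | i < ℓ ∧ s (γ i) ≠ s (γ (i + 1))}.ncard)
    (hN2 : 2 ≤ N) :
    N + h ≤ C :=
  stmt_7_general p ℓ γ hclosed hfib hnoconsec s N hN h hh C hC hN2
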